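/- arXiv:2307.12085 — 3 statements merged into one kernel-verified Lean document; each statement's English description precedes it below -/
import Mathlib

section
/- Let E ⊂ ℝ^d be a convex body and y ∈ ℝ^d. Then the Lebesgue measure of the symmetric difference E △ (E − y) is at most C_d·‖y‖·S, where S is the surface area of E and C_d depends only on d. -/
open MeasureTheory Set Metric Topology
open scoped NNReal ENNReal

variable {n : ℕ}

noncomputable def phi (i : Fin (n+1)) (t : ℝ) (z : Fin n → ℝ) : EuclideanSpace ℝ (Fin (n+1)) :=
  (WithLp.equiv 2 _).symm (Fin.insertNth i t z)

lemma phi_same (i : Fin (n+1)) (t : ℝ) (z : Fin n → ℝ) : phi i t z i = t := by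
  simp [phi, Fin.insertNth_apply_same]

lemma phi_succAbove (i : Fin (n+1)) (t : ℝ) (z : Fin n → ℝ) (j : Fin n) :
    phi i t z (i.succAbove j) = z j := by
  simp [phi, Fin.insertNth_apply_succAbove]

lemma phi_add (i : Fin (n+1)) (t s : ℝ) (z w : Fin n → ℝ) :
    phi i (t + s) (z + w) = phi i t z + phi i s w := by
  ext j
  refine Fin.succAboveCases i ?_ ?_ j
  · simp [phi_same, PiLp.add_apply]
  · intro j; simp [phi_succAbove, PiLp.add_apply]

lemma phi_smul (i : Fin (n+1)) (c t : ℝ) (z : Fin n → ℝ) :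
    phi i (c * t) (c • z) = c • phi i t z := by
  ext j
  refine Fin.succAboveCases i ?_ ?_ j
  · simp [phi_same, PiLp.smul_apply]
  · intro j; simp [phi_succAbove, PiLp.smul_apply]

lemma abs_coord_le_norm (x : EuclideanSpace ℝ (Fin (n+1))) (i : Fin (n+1)) : |x i| ≤ ‖x‖ := by
  rw [EuclideanSpace.norm_eq]
  have : |x i| = Real.sqrt (‖x i‖ ^ 2) := by
    rw [Real.sqrt_sq_eq_abs]; simp
  rw [this]
  apply Real.sqrt_le_sqrt
  exact Finset.single_le_sum (f := fun j => ‖x j‖ ^ 2) (fun j _ => sq_nonneg _) (Finset.mem_univ i)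

/-- the projection forgetting coordinate `i` -/
def pr (i : Fin (n+1)) (x : EuclideanSpace ℝ (Fin (n+1))) : Fin n → ℝ :=
  fun j => x (i.succAbove j)

lemma phi_pr (i : Fin (n+1)) (x : EuclideanSpace ℝ (Fin (n+1))) :
    phi i (x i) (pr i x) = x := by
  ext j
  refine Fin.succAboveCases i ?_ ?_ j
  · simp [phi_same]
  · intro j; simp [phi_succAbove, pr]

lemma continuous_pr (i : Fin (n+1)) : Continuous (pr (n := n) i) := by
  refine continuous_pi fun j => ?_
  exact (continuous_apply (i.succAbove j)).comp (PiLp.continuous_ofLp 2 fun _ : Fin (n+1) => ℝ)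

lemma continuous_phi_t (i : Fin (n+1)) (z : Fin n → ℝ) :
    Continuous fun t : ℝ => phi i t z := by
  have h : ∀ t : ℝ, phi i t z = t • phi i 1 0 + phi i 0 z := by
    intro t
    rw [← phi_smul, mul_one, smul_zero, ← phi_add, add_zero, zero_add]
  rw [funext h]
  exact (continuous_id.smul continuous_const).add continuous_const


noncomputable def psi : EuclideanSpace ℝ (Fin (n+1)) ≃ᵐ (ℝ × (Fin n → ℝ)) :=
  (MeasurableEquiv.toLp 2 (Fin (n+1) → ℝ)).symm.trans
    (MeasurableEquiv.piFinSuccAbove (fun _ => ℝ) 0)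

lemma psi_symm_eq (t : ℝ) (z : Fin n → ℝ) : (psi (n := n)).symm (t, z) = phi 0 t z := rfl

lemma psi_mp : MeasurePreserving (psi (n := n)) volume (volume.prod volume) := by
  have h1 := EuclideanSpace.volume_preserving_symm_measurableEquiv_toLp (Fin (n+1))
  have h2 := volume_preserving_piFinSuccAbove (fun _ : Fin (n+1) => ℝ) 0
  rw [← Measure.volume_eq_prod]
  exact h2.comp h1

lemma vol_eq_lintegral_slices {S : Set (EuclideanSpace ℝ (Fin (n+1)))} (hS : MeasurableSet S) :
    volume S = ∫⁻ z : Fin n → ℝ, volume {t : ℝ | phi 0 t z ∈ S} := by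
  have hmp := (psi_mp (n := n)).symm
  have h1 : volume S = (volume.prod volume) ((psi (n := n)).symm ⁻¹' S) :=
    (hmp.measure_preimage hS.nullMeasurableSet).symm
  rw [h1, Measure.prod_apply_symm (psi.symm.measurable hS)]
  rfl


lemma phi_add_y (t r : ℝ) (z : Fin n → ℝ) :
    phi 0 t z + phi 0 r 0 = phi 0 (t + r) z := by
  rw [← phi_add, add_zero]

lemma vol_symmDiff_le (E : Set (EuclideanSpace ℝ (Fin (n+1)))) (hE : Convex ℝ E)
    (hEc : IsCompact E) {r : ℝ} (hr : 0 ≤ r) :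
    volume (symmDiff E ((fun x => x - phi 0 r 0) '' E)) ≤
      (ENNReal.ofReal r + ENNReal.ofReal r) * volume (pr 0 '' E) := by
  set y := phi (n := n) 0 r 0 with hy
  set E' := (fun x => x - y) '' E with hE'
  have hE'c : IsCompact E' := hEc.image (continuous_id.sub continuous_const)
  have hS : MeasurableSet (symmDiff E E') := by
    rw [Set.symmDiff_def]
    exact (hEc.isClosed.measurableSet.diff hE'c.isClosed.measurableSet).union
      (hE'c.isClosed.measurableSet.diff hEc.isClosed.measurableSet)
  have hproj : MeasurableSet (pr 0 '' E) := (hEc.image (continuous_pr 0)).isClosed.measurableSet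
  obtain ⟨R, hR⟩ := hEc.isBounded.subset_closedBall 0
  rw [vol_eq_lintegral_slices hS]
  have key : ∀ z : Fin n → ℝ, volume {t : ℝ | phi 0 t z ∈ symmDiff E E'} ≤
      Set.indicator (pr 0 '' E) (fun _ => ENNReal.ofReal r + ENNReal.ofReal r) z := by
    intro z
    set A := {t : ℝ | phi 0 t z ∈ E} with hA
    have hmem' : ∀ t : ℝ, (phi 0 t z ∈ E') ↔ (t + r) ∈ A := by
      intro t
      constructor
      · rintro ⟨x, hx, hxe⟩
        have hxx : x = phi 0 t z + y := by
          rw [← hxe]; exact (sub_add_cancel x y).symm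
        rw [hy, phi_add_y] at hxx
        rwa [hxx] at hx
      · intro h
        refine ⟨phi 0 (t + r) z, h, ?_⟩
        show phi 0 (t + r) z - y = phi 0 t z
        rw [← phi_add_y, ← hy]
        exact add_sub_cancel_right _ _
    by_cases hne : A.Nonempty
    · obtain ⟨t₀, ht₀⟩ := hne
      have hz : z ∈ pr 0 '' E := by
        refine ⟨phi 0 t₀ z, ht₀, ?_⟩
        funext j; exact phi_succAbove 0 t₀ z j
      rw [Set.indicator_of_mem hz]
      -- A is a compact interval
      have hAc : IsClosed A := hEc.isClosed.preimage (continuous_phi_t 0 z)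
      have hconv : Convex ℝ A := by
        intro t₁ h₁ t₂ h₂ a b ha hb hab
        show phi 0 (a • t₁ + b • t₂) z ∈ E
        have hrw : phi 0 (a • t₁ + b • t₂) z = a • phi 0 t₁ z + b • phi 0 t₂ z := by
          rw [← phi_smul, ← phi_smul, ← phi_add, smul_eq_mul, smul_eq_mul]
          congr 1
          rw [← add_smul, hab, one_smul]
        rw [hrw]
        exact hE h₁ h₂ ha hb hab
      have hsub : A ⊆ Set.Icc (-R) R := by
        intro t ht
        have h1 : |t| ≤ R := by
          have := abs_coord_le_norm (phi 0 t z) 0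
          rw [phi_same] at this
          refine this.trans ?_
          have := hR ht
          rwa [Metric.mem_closedBall, dist_zero_right] at this
        exact abs_le.mp h1
      have hAcomp : IsCompact A := isCompact_Icc.of_isClosed_subset hAc hsub
      have hIcc : A = Set.Icc (sInf A) (sSup A) :=
        eq_Icc_of_connected_compact ⟨⟨t₀, ht₀⟩, hconv.isPreconnected⟩ hAcomp
      set m := sInf A
      set M := sSup A
      have hslice : {t : ℝ | phi 0 t z ∈ symmDiff E E'} ⊆
          Set.Ioc (M - r) M ∪ Set.Ico (m - r) m := by
        intro t ht
        rw [Set.mem_setOf_eq, Set.mem_symmDiff] at ht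
        have htA : (phi 0 t z ∈ E) ↔ t ∈ A := Iff.rfl
        rcases ht with ⟨h1, h2⟩ | ⟨h1, h2⟩
        · left
          rw [htA, hIcc] at h1
          rw [hmem', hIcc] at h2
          simp only [Set.mem_Icc, not_and, not_le] at h2
          constructor
          · have := h2 (by linarith [h1.1])
            linarith
          · exact h1.2
        · right
          rw [hmem', hIcc] at h1
          rw [htA, hIcc] at h2
          simp only [Set.mem_Icc, not_and, not_le] at h2
          rcases le_or_gt m t with h | h
          · exfalso; have := h2 h; linarith [h1.2]
          · exact ⟨by linarith [h1.1], h⟩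
      calc volume {t : ℝ | phi 0 t z ∈ symmDiff E E'} ≤
          volume (Set.Ioc (M - r) M ∪ Set.Ico (m - r) m) := measure_mono hslice
        _ ≤ volume (Set.Ioc (M - r) M) + volume (Set.Ico (m - r) m) := measure_union_le _ _
        _ = ENNReal.ofReal r + ENNReal.ofReal r := by
            rw [Real.volume_Ioc, Real.volume_Ico]
            congr 1 <;> ring_nf
    · have hempty : {t : ℝ | phi 0 t z ∈ symmDiff E E'} = ∅ := by
        ext t
        simp only [Set.mem_setOf_eq, Set.mem_empty_iff_false, iff_false]
        intro ht
        rw [Set.mem_symmDiff] at ht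
        rcases ht with ⟨h1, _⟩ | ⟨h1, _⟩
        · exact hne ⟨t, h1⟩
        · rw [hmem'] at h1; exact hne ⟨t + r, h1⟩
      simp [hempty]
  calc (∫⁻ z, volume {t : ℝ | phi 0 t z ∈ symmDiff E E'}) ≤
      ∫⁻ z, Set.indicator (pr 0 '' E) (fun _ => ENNReal.ofReal r + ENNReal.ofReal r) z :=
        lintegral_mono key
    _ = (ENNReal.ofReal r + ENNReal.ofReal r) * volume (pr 0 '' E) := by
        rw [lintegral_indicator_const hproj]


lemma norm_phi_sub (i : Fin (n+1)) (t s : ℝ) (z : Fin n → ℝ) :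
    ‖phi i t z - phi i s z‖ = |t - s| := by
  rw [EuclideanSpace.norm_eq, Fin.sum_univ_succAbove _ i]
  simp only [PiLp.sub_apply, phi_same, phi_succAbove, sub_self]
  simp [Real.sqrt_sq_eq_abs, sq_abs]

lemma lipschitz_pr (i : Fin (n+1)) : LipschitzWith 1 (pr (n := n) i) := by
  refine LipschitzWith.of_dist_le_mul fun x x' => ?_
  simp only [NNReal.coe_one, one_mul]
  refine (dist_pi_le_iff dist_nonneg).2 fun j => ?_
  have h1 : dist (x (i.succAbove j)) (x' (i.succAbove j)) = |(x - x') (i.succAbove j)| := by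
    rw [Real.dist_eq]; simp [PiLp.sub_apply]
  rw [show dist (pr i x j) (pr i x' j) = dist (x (i.succAbove j)) (x' (i.succAbove j)) from rfl, h1]
  calc |(x - x') (i.succAbove j)| ≤ ‖x - x'‖ := abs_coord_le_norm _ _
    _ = dist x x' := (dist_eq_norm x x').symm

lemma proj_subset_pr_frontier (E : Set (EuclideanSpace ℝ (Fin (n+1)))) (hEc : IsCompact E) :
    pr 0 '' E ⊆ pr 0 '' (frontier E) := by
  obtain ⟨R, hR⟩ := hEc.isBounded.subset_closedBall 0
  rintro z ⟨x, hx, rfl⟩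
  set A := {t : ℝ | phi 0 t (pr 0 x) ∈ E} with hA
  have hne : A.Nonempty := by
    refine ⟨x 0, ?_⟩
    show phi 0 (x 0) (pr 0 x) ∈ E
    have : phi 0 (x 0) (pr 0 x) = x := by
      ext j
      refine Fin.succAboveCases 0 ?_ ?_ j
      · exact phi_same _ _ _
      · intro j; exact phi_succAbove _ _ _ _
    rwa [this]
  have hAc : IsClosed A := hEc.isClosed.preimage (continuous_phi_t 0 (pr 0 x))
  have hsub : A ⊆ Set.Icc (-R) R := by
    intro t ht
    refine abs_le.mp ?_
    have h := abs_coord_le_norm (phi 0 t (pr 0 x)) 0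
    rw [phi_same] at h
    refine h.trans ?_
    have := hR ht
    rwa [Metric.mem_closedBall, dist_zero_right] at this
  have hAcomp : IsCompact A := isCompact_Icc.of_isClosed_subset hAc hsub
  set M := sSup A
  have hM : M ∈ A := hAcomp.sSup_mem hne
  refine ⟨phi 0 M (pr 0 x), ?_, funext fun j => phi_succAbove _ _ _ _⟩
  constructor
  · exact subset_closure hM
  · intro hint
    obtain ⟨ε, hε, hball⟩ := Metric.isOpen_iff.1 isOpen_interior _ hint
    have hq : phi 0 (M + ε/2) (pr 0 x) ∈ E := by
      refine interior_subset (hball ?_)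
      rw [Metric.mem_ball, dist_eq_norm, norm_phi_sub]
      rw [abs_of_nonneg (by linarith)]
      linarith
    have : M + ε/2 ≤ M := le_csSup hAcomp.bddAbove hq
    linarith

lemma proj_vol_le_hausdorff (E : Set (EuclideanSpace ℝ (Fin (n+1)))) (hEc : IsCompact E) :
    volume (pr 0 '' E) ≤ μH[(n : ℝ)] (frontier E) := by
  have h1 : (volume : Measure (Fin n → ℝ)) = μH[(n : ℝ)] := by
    rw [← hausdorffMeasure_pi_real (ι := Fin n), Fintype.card_fin]
  rw [h1]
  calc μH[(n : ℝ)] (pr 0 '' E) ≤ μH[(n : ℝ)] (pr 0 '' frontier E) :=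
        measure_mono (proj_subset_pr_frontier E hEc)
    _ ≤ ((1 : ℝ≥0) : ℝ≥0∞) ^ (n : ℝ) * μH[(n : ℝ)] (frontier E) :=
        (lipschitz_pr 0).hausdorffMeasure_image_le (by positivity) _
    _ = μH[(n : ℝ)] (frontier E) := by simp


def Qcube (n : ℕ) : Set (EuclideanSpace ℝ (Fin (n+1))) := {x | ∀ i, |x i| ≤ 1}

lemma cont_coord (i : Fin (n+1)) : Continuous fun x : EuclideanSpace ℝ (Fin (n+1)) => x i :=
  (continuous_apply i).comp (PiLp.continuous_ofLp 2 fun _ : Fin (n+1) => ℝ)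

lemma Qcube_closed : IsClosed (Qcube n) := by
  have : Qcube n = ⋂ i, {x : EuclideanSpace ℝ (Fin (n+1)) | |x i| ≤ 1} := by
    ext x; simp [Qcube]
  rw [this]
  exact isClosed_iInter fun i =>
    IsClosed.preimage ((cont_coord i).abs) isClosed_Iic (t := Set.Iic 1)

lemma Qcube_convex : Convex ℝ (Qcube n) := by
  intro x hx y hy a b ha hb hab
  intro i
  have : (a • x + b • y) i = a * x i + b * y i := rfl
  rw [this]
  calc |a * x i + b * y i| ≤ |a * x i| + |b * y i| := abs_add_le _ _
    _ = a * |x i| + b * |y i| := by rw [abs_mul, abs_mul, abs_of_nonneg ha, abs_of_nonneg hb]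
    _ ≤ a * 1 + b * 1 := by
        gcongr
        · exact hx i
        · exact hy i
    _ = 1 := by rw [mul_one, mul_one, hab]

lemma ball_subset_Qcube : ball (0 : EuclideanSpace ℝ (Fin (n+1))) 1 ⊆ Qcube n := by
  intro x hx i
  rw [mem_ball, dist_zero_right] at hx
  exact (abs_coord_le_norm x i).trans hx.le

lemma Qcube_subset_ball : Qcube n ⊆ ball (0 : EuclideanSpace ℝ (Fin (n+1))) (n + 2) := by
  intro x hx
  rw [mem_ball, dist_zero_right, EuclideanSpace.norm_eq]
  have h1 : ∑ i, ‖x i‖ ^ 2 ≤ (n + 1 : ℝ) := by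
    calc ∑ i, ‖x i‖ ^ 2 ≤ ∑ _i : Fin (n+1), (1:ℝ) := by
          refine Finset.sum_le_sum fun i _ => ?_
          have := hx i
          rw [Real.norm_eq_abs]
          nlinarith [abs_nonneg (x i)]
      _ = (n + 1 : ℝ) := by simp
  calc Real.sqrt (∑ i, ‖x i‖ ^ 2) ≤ Real.sqrt (n + 1 : ℝ) := Real.sqrt_le_sqrt h1
    _ < n + 2 := by
        rw [show (n + 2 : ℝ) = Real.sqrt ((n+2)^2) by rw [Real.sqrt_sq (by positivity)]]
        apply Real.sqrt_lt_sqrt (by positivity)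
        nlinarith [Nat.cast_nonneg (α := ℝ) n]
  -- might need fixing

lemma Qcube_compact : IsCompact (Qcube n) :=
  (isCompact_closedBall (0 : EuclideanSpace ℝ (Fin (n+1))) (n+2)).of_isClosed_subset
    Qcube_closed (Qcube_subset_ball.trans ball_subset_closedBall)

lemma frontier_Qcube_subset :
    frontier (Qcube n) ⊆ ⋃ i : Fin (n+1),
      ({x ∈ Qcube n | x i = 1} ∪ {x ∈ Qcube n | x i = -1}) := by
  intro x hx
  have hxQ : x ∈ Qcube n := by
    have := frontier_subset_closure (s := Qcube n) hx
    rwa [Qcube_closed.closure_eq] at this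
  have hnotint : x ∉ interior (Qcube n) := hx.2
  by_contra hcon
  simp only [Set.mem_iUnion, Set.mem_union, Set.mem_setOf_eq, not_or, not_exists, not_and] at hcon
  -- so for all i, |x i| < 1
  have hlt : ∀ i, |x i| < 1 := by
    intro i
    rcases lt_or_eq_of_le (hxQ i) with h | h
    · exact h
    · exfalso
      rcases abs_eq (by norm_num : (0:ℝ) ≤ 1) |>.mp h with h1 | h1
      · exact (hcon i).1 hxQ h1
      · exact (hcon i).2 hxQ h1
  apply hnotint
  have hopen : IsOpen {y : EuclideanSpace ℝ (Fin (n+1)) | ∀ i, |y i| < 1} := by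
    have : {y : EuclideanSpace ℝ (Fin (n+1)) | ∀ i, |y i| < 1} =
        ⋂ i, {y : EuclideanSpace ℝ (Fin (n+1)) | |y i| < 1} := by ext y; simp
    rw [this]
    exact isOpen_iInter_of_finite fun i =>
      IsOpen.preimage ((cont_coord i).abs) isOpen_Iio (t := Set.Iio 1)
  have hsub : {y : EuclideanSpace ℝ (Fin (n+1)) | ∀ i, |y i| < 1} ⊆ Qcube n :=
    fun y hy i => (hy i).le
  exact interior_mono hsub (hopen.subset_interior_iff.mpr subset_rfl hlt)

lemma phi_pr' (i : Fin (n+1)) (x : EuclideanSpace ℝ (Fin (n+1))) :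
    phi i (x i) (fun j => x (i.succAbove j)) = x := by
  ext j
  refine Fin.succAboveCases i ?_ ?_ j
  · exact phi_same _ _ _
  · intro j; exact phi_succAbove _ _ _ _

lemma norm_phi_fixed_sub (i : Fin (n+1)) (c : ℝ) (z z' : Fin n → ℝ) :
    ‖phi i c z - phi i c z'‖ = Real.sqrt (∑ j, (z j - z' j)^2) := by
  rw [EuclideanSpace.norm_eq, Fin.sum_univ_succAbove _ i]
  simp only [PiLp.sub_apply, phi_same, phi_succAbove, sub_self]
  norm_num [sq_abs]

lemma lipschitz_phi_z (i : Fin (n+1)) (c : ℝ) :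
    LipschitzWith ((n:ℝ≥0) + 1) (fun z : Fin n → ℝ => phi i c z) := by
  refine LipschitzWith.of_dist_le_mul fun z z' => ?_
  rw [dist_eq_norm, norm_phi_fixed_sub]
  have hb : ∀ j, (z j - z' j)^2 ≤ (dist z z')^2 := by
    intro j
    have h1 : |z j - z' j| ≤ dist z z' := by
      rw [← Real.dist_eq]; exact dist_le_pi_dist z z' j
    nlinarith [abs_nonneg (z j - z' j), sq_abs (z j - z' j)]
  calc Real.sqrt (∑ j, (z j - z' j)^2) ≤ Real.sqrt (∑ _j : Fin n, (dist z z')^2) :=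
        Real.sqrt_le_sqrt (Finset.sum_le_sum fun j _ => hb j)
    _ = Real.sqrt ((n : ℝ)) * dist z z' := by
        rw [Finset.sum_const, Finset.card_univ, Fintype.card_fin, nsmul_eq_mul,
          Real.sqrt_mul (Nat.cast_nonneg n), Real.sqrt_sq dist_nonneg]
    _ ≤ ((n:ℝ) + 1) * dist z z' := by
        gcongr
        rw [show (n:ℝ) + 1 = Real.sqrt (((n:ℝ)+1)^2) by rw [Real.sqrt_sq (by positivity)]]
        apply Real.sqrt_le_sqrt; nlinarith [Nat.cast_nonneg (α := ℝ) n]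
    _ = (((n:ℝ≥0) + 1) : ℝ≥0) * dist z z' := by norm_num

lemma face_subset (i : Fin (n+1)) (c : ℝ) (hc : |c| ≤ 1) :
    {x ∈ Qcube n | x i = c} ⊆
      (fun z : Fin n → ℝ => phi i c z) '' (closedBall (0 : Fin n → ℝ) 1) := by
  rintro x ⟨hxQ, hxi⟩
  refine ⟨fun j => x (i.succAbove j), ?_, by rw [← hxi]; exact phi_pr' i x⟩
  rw [mem_closedBall, dist_zero_right]
  rw [pi_norm_le_iff_of_nonneg (by norm_num)]
  intro j
  rw [Real.norm_eq_abs]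
  exact hxQ _

lemma hausdorff_face_lt_top (i : Fin (n+1)) (c : ℝ) (hc : |c| ≤ 1) :
    μH[(n : ℝ)] {x ∈ Qcube n | x i = c} < ⊤ := by
  have h1 : μH[(n : ℝ)] {x ∈ Qcube n | x i = c} ≤
      μH[(n : ℝ)] ((fun z : Fin n → ℝ => phi i c z) '' (closedBall (0 : Fin n → ℝ) 1)) :=
    measure_mono (face_subset i c hc)
  have h2 := (lipschitz_phi_z i c).hausdorffMeasure_image_le
    (by positivity : (0:ℝ) ≤ (n:ℝ)) (closedBall (0 : Fin n → ℝ) 1)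
  have h3 : μH[(n : ℝ)] (closedBall (0 : Fin n → ℝ) 1) = volume (closedBall (0 : Fin n → ℝ) 1) := by
    rw [← hausdorffMeasure_pi_real (ι := Fin n), Fintype.card_fin]
  refine (h1.trans h2).trans_lt ?_
  rw [h3]
  have h4 : volume (closedBall (0 : Fin n → ℝ) 1) < ⊤ :=
    (isCompact_closedBall _ _).measure_lt_top
  exact ENNReal.mul_lt_top (ENNReal.rpow_lt_top_of_nonneg (by positivity) ENNReal.coe_ne_top) h4

lemma hausdorff_frontier_Qcube_lt_top : μH[(n : ℝ)] (frontier (Qcube n)) < ⊤ := by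
  have h1 := measure_mono (μ := μH[(n : ℝ)]) (frontier_Qcube_subset (n := n))
  refine h1.trans_lt ?_
  refine (measure_iUnion_le _).trans_lt ?_
  have : ∀ i : Fin (n+1), μH[(n : ℝ)]
      ({x ∈ Qcube n | x i = 1} ∪ {x ∈ Qcube n | x i = -1}) < ⊤ := by
    intro i
    refine (measure_union_le _ _).trans_lt ?_
    exact ENNReal.add_lt_top.2 ⟨hausdorff_face_lt_top i 1 (by norm_num),
      hausdorff_face_lt_top i (-1) (by norm_num)⟩
  rw [tsum_fintype]
  exact ENNReal.sum_lt_top.2 fun i _ => this i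


lemma Qcube_mem_nhds : Qcube n ∈ 𝓝 (0 : EuclideanSpace ℝ (Fin (n+1))) :=
  Filter.mem_of_superset (ball_mem_nhds _ one_pos) ball_subset_Qcube

lemma hausdorff_frontier_lt_top (E : Set (EuclideanSpace ℝ (Fin (n+1))))
    (hE : Convex ℝ E) (hEc : IsCompact E) (h0 : (0 : EuclideanSpace ℝ (Fin (n+1))) ∈ interior E) :
    μH[(n : ℝ)] (frontier E) < ⊤ := by
  -- basic facts about E
  have hnhds : E ∈ 𝓝 (0 : EuclideanSpace ℝ (Fin (n+1))) := mem_interior_iff_mem_nhds.1 h0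
  have habs : Absorbent ℝ E := absorbent_nhds_zero hnhds
  obtain ⟨ε, hε, hballE⟩ := Metric.mem_nhds_iff.1 hnhds
  set εn : ℝ≥0 := ⟨ε, hε.le⟩ with hεn
  have hLip : LipschitzWith εn⁻¹ (gauge E) :=
    hE.lipschitzWith_gauge (by exact_mod_cast hε) hballE
  obtain ⟨R0, hR0⟩ := hEc.isBounded.subset_closedBall 0
  set R : ℝ := max R0 0 + 1 with hR
  have hRpos : 0 < R := by positivity
  have hER : E ⊆ ball 0 R := fun x hx => by
    have := hR0 hx
    rw [mem_closedBall, dist_zero_right] at this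
    rw [mem_ball, dist_zero_right]
    have : ‖x‖ ≤ max R0 0 := this.trans (le_max_left _ _)
    linarith
  -- gauge lower bound
  have hglb : ∀ x : EuclideanSpace ℝ (Fin (n+1)), ‖x‖ / R ≤ gauge E x := by
    intro x
    have := gauge_mono habs hER x
    rwa [gauge_ball hRpos.le] at this
  -- gauge of Q lower bound
  have habsQ : Absorbent ℝ (Qcube n) := absorbent_nhds_zero Qcube_mem_nhds
  have hgQlb : ∀ x : EuclideanSpace ℝ (Fin (n+1)), ‖x‖ / (n + 2) ≤ gauge (Qcube n) x := by
    intro x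
    have := gauge_mono habsQ Qcube_subset_ball x
    rwa [gauge_ball (by positivity)] at this
  set F : EuclideanSpace ℝ (Fin (n+1)) → EuclideanSpace ℝ (Fin (n+1)) :=
    fun x => (gauge E x)⁻¹ • x with hF
  -- covering
  have hcover : frontier E ⊆ F '' (frontier (Qcube n)) := by
    intro p hp
    have hgp : gauge E p = 1 := (gauge_eq_one_iff_mem_frontier hE hnhds).2 hp
    have hpne : p ≠ 0 := by
      rintro rfl
      exact hp.2 h0
    set c := gauge (Qcube n) p with hc
    have hcpos : 0 < c := by
      refine lt_of_lt_of_le ?_ (hgQlb p)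
      have hp0 : 0 < ‖p‖ := norm_pos_iff.2 hpne
      positivity
    refine ⟨c⁻¹ • p, ?_, ?_⟩
    · rw [← gauge_eq_one_iff_mem_frontier Qcube_convex Qcube_mem_nhds]
      rw [gauge_smul_of_nonneg (inv_nonneg.2 hcpos.le), smul_eq_mul, ← hc,
        inv_mul_cancel₀ hcpos.ne']
    · show (gauge E (c⁻¹ • p))⁻¹ • (c⁻¹ • p) = p
      rw [gauge_smul_of_nonneg (inv_nonneg.2 hcpos.le), smul_eq_mul, hgp, mul_one,
        inv_inv, smul_smul, mul_inv_cancel₀ hcpos.ne', one_smul]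
  -- Lipschitz on frontier Q
  set L : ℝ := ((εn⁻¹ : ℝ≥0) : ℝ) with hL
  have hLnn : 0 ≤ L := (εn⁻¹ : ℝ≥0).coe_nonneg
  set K : ℝ≥0 := Real.toNNReal (R + R^2 * L * (n+2)) with hK
  have hFlip : LipschitzOnWith K F (frontier (Qcube n)) := by
    rw [lipschitzOnWith_iff_dist_le_mul]
    intro x hx y hy
    -- norms between 1 and n+2 on frontier Q
    have hfq : ∀ w : EuclideanSpace ℝ (Fin (n+1)), w ∈ frontier (Qcube n) →
        1 ≤ ‖w‖ ∧ ‖w‖ ≤ n + 2 := by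
      intro w hw
      constructor
      · by_contra hlt
        push_neg at hlt
        have : w ∈ interior (Qcube n) :=
          (isOpen_ball.subset_interior_iff.2 ball_subset_Qcube)
            (by rwa [mem_ball, dist_zero_right])
        exact hw.2 this
      · have hwQ : w ∈ Qcube n := by
          have := frontier_subset_closure (s := Qcube n) hw
          rwa [Qcube_closed.closure_eq] at this
        have := Qcube_subset_ball hwQ
        rw [mem_ball, dist_zero_right] at this
        exact this.le
    obtain ⟨hx1, hx2⟩ := hfq x hx
    obtain ⟨hy1, hy2⟩ := hfq y hy
    -- gauge bounds
    have hgb : ∀ w : EuclideanSpace ℝ (Fin (n+1)), 1 ≤ ‖w‖ → 1 / R ≤ gauge E w := by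
      intro w hw
      refine le_trans ?_ (hglb w)
      gcongr
    have hgx := hgb x hx1
    have hgy := hgb y hy1
    have hgxpos : 0 < gauge E x := lt_of_lt_of_le (by positivity) hgx
    have hgypos : 0 < gauge E y := lt_of_lt_of_le (by positivity) hgy
    have hgxinv : (gauge E x)⁻¹ ≤ R := by
      rw [← one_div]
      rw [div_le_iff₀ hgxpos]
      rw [div_le_iff₀ hRpos] at hgx
      linarith
    have hgyinv : (gauge E y)⁻¹ ≤ R := by
      rw [← one_div]
      rw [div_le_iff₀ hgypos]
      rw [div_le_iff₀ hRpos] at hgy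
      linarith
    have hgdiff : |gauge E x - gauge E y| ≤ L * dist x y := by
      have := hLip.dist_le_mul x y
      rwa [Real.dist_eq] at this
    have hsplit : F x - F y =
        (gauge E x)⁻¹ • (x - y) + ((gauge E x)⁻¹ - (gauge E y)⁻¹) • y := by
      simp only [hF, smul_sub, sub_smul]
      abel
    have hnorm : dist (F x) (F y) ≤
        (gauge E x)⁻¹ * ‖x - y‖ + |(gauge E x)⁻¹ - (gauge E y)⁻¹| * ‖y‖ := by
      rw [dist_eq_norm, hsplit]
      refine (norm_add_le _ _).trans ?_
      rw [norm_smul, norm_smul, Real.norm_eq_abs, Real.norm_eq_abs,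
        abs_of_pos (inv_pos.2 hgxpos)]
    have hinvdiff : |(gauge E x)⁻¹ - (gauge E y)⁻¹| ≤ R^2 * (L * dist x y) := by
      have heq : (gauge E x)⁻¹ - (gauge E y)⁻¹ =
          (gauge E y - gauge E x) * ((gauge E x)⁻¹ * (gauge E y)⁻¹) := by
        field_simp
      rw [heq, abs_mul, abs_sub_comm]
      have h2 : |(gauge E x)⁻¹ * (gauge E y)⁻¹| ≤ R^2 := by
        rw [abs_mul, abs_of_pos (inv_pos.2 hgxpos), abs_of_pos (inv_pos.2 hgypos)]
        calc (gauge E x)⁻¹ * (gauge E y)⁻¹ ≤ R * R := by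
              apply mul_le_mul hgxinv hgyinv (inv_pos.2 hgypos).le hRpos.le
          _ = R^2 := (sq R).symm
      calc |gauge E x - gauge E y| * |(gauge E x)⁻¹ * (gauge E y)⁻¹| ≤
            (L * dist x y) * R^2 := by
            apply mul_le_mul hgdiff h2 (abs_nonneg _) (by positivity)
        _ = R^2 * (L * dist x y) := by ring
    have hfinal : dist (F x) (F y) ≤ (R + R^2 * L * (n+2)) * dist x y := by
      have hxy : ‖x - y‖ = dist x y := (dist_eq_norm x y).symm
      calc dist (F x) (F y) ≤ (gauge E x)⁻¹ * ‖x - y‖ + |(gauge E x)⁻¹ - (gauge E y)⁻¹| * ‖y‖ :=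
            hnorm
        _ ≤ R * dist x y + (R^2 * (L * dist x y)) * (n+2) := by
            rw [hxy]
            refine add_le_add ?_ ?_
            · exact mul_le_mul_of_nonneg_right hgxinv dist_nonneg
            · exact mul_le_mul hinvdiff hy2 (norm_nonneg y) (by positivity)
        _ = (R + R^2 * L * (n+2)) * dist x y := by ring
    refine hfinal.trans_eq ?_
    congr 1
    rw [hK, Real.coe_toNNReal]
    positivity
  have h1 : μH[(n : ℝ)] (frontier E) ≤ μH[(n : ℝ)] (F '' frontier (Qcube n)) :=
    measure_mono hcover
  have h2 := hFlip.hausdorffMeasure_image_le (by positivity : (0:ℝ) ≤ (n:ℝ))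
  refine (h1.trans h2).trans_lt ?_
  exact ENNReal.mul_lt_top (ENNReal.rpow_lt_top_of_nonneg (by positivity) ENNReal.coe_ne_top)
    hausdorff_frontier_Qcube_lt_top


lemma main_aux (E : Set (EuclideanSpace ℝ (Fin (n+1)))) (hE : Convex ℝ E) (hEc : IsCompact E)
    (y : EuclideanSpace ℝ (Fin (n+1))) :
    volume (symmDiff E ((fun x => x - y) '' E)) ≤
      (ENNReal.ofReal ‖y‖ + ENNReal.ofReal ‖y‖) * μH[(n : ℝ)] (frontier E) := by
  rcases eq_or_ne y 0 with rfl | hy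
  · have : (fun x : EuclideanSpace ℝ (Fin (n+1)) => x - 0) '' E = E := by
      simp
    rw [this, symmDiff_self]
    simp
  -- rotate so that y is along the first coordinate
  have hynorm : ‖y‖ ≠ 0 := norm_ne_zero_iff.2 hy
  set u : EuclideanSpace ℝ (Fin (n+1)) := ‖y‖⁻¹ • y with hu
  have hunorm : ‖u‖ = 1 := by
    rw [hu, norm_smul, norm_inv, norm_norm, inv_mul_cancel₀ hynorm]
  have horth : Orthonormal ℝ (Set.restrict {(0 : Fin (n+1))} (fun _ => u)) := by
    refine ⟨fun i => hunorm, ?_⟩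
    intro i j hij
    exfalso
    exact hij (Subtype.ext ((Set.mem_singleton_iff.1 i.2).trans
      (Set.mem_singleton_iff.1 j.2).symm))
  obtain ⟨b, hb⟩ := horth.exists_orthonormalBasis_extension_of_card_eq
    (by simp [finrank_euclideanSpace_fin])
  set f := b.repr with hf
  have hfu : f u = EuclideanSpace.single 0 1 := by
    rw [← hb 0 (Set.mem_singleton _)]
    exact b.repr_self 0
  have hfy : f y = phi 0 ‖y‖ 0 := by
    have h1 : y = ‖y‖ • u := by
      rw [hu, smul_smul, mul_inv_cancel₀ hynorm, one_smul]
    have h2 : f y = ‖y‖ • EuclideanSpace.single 0 1 := by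
      conv_lhs => rw [h1]
      rw [_root_.map_smul, hfu]
    rw [h2]
    ext j
    refine Fin.succAboveCases 0 ?_ ?_ j
    · rw [phi_same]
      show ‖y‖ * _ = _
      simp [EuclideanSpace.single_apply]
    · intro j
      rw [phi_succAbove]
      show ‖y‖ * _ = _
      simp [EuclideanSpace.single_apply, (Fin.succ_ne_zero j)]
  -- transfer
  set S := symmDiff E ((fun x => x - y) '' E) with hS
  have hfS : f '' S = symmDiff (f '' E) ((fun x => x - phi 0 ‖y‖ 0) '' (f '' E)) := by
    rw [hS, Set.image_symmDiff f.injective]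
    congr 1
    rw [← Set.image_comp, ← Set.image_comp]
    refine Set.image_congr fun x _ => ?_
    show f (x - y) = f x - phi 0 ‖y‖ 0
    rw [map_sub, hfy]
  have hSmeas : MeasurableSet S := by
    have hE'c : IsCompact ((fun x => x - y) '' E) :=
      hEc.image (continuous_id.sub continuous_const)
    rw [hS, Set.symmDiff_def]
    exact (hEc.isClosed.measurableSet.diff hE'c.isClosed.measurableSet).union
      (hE'c.isClosed.measurableSet.diff hEc.isClosed.measurableSet)
  have hvol : volume S = volume (f '' S) := by
    have h1 : f '' S = f.symm ⁻¹' S := by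
      ext x
      constructor
      · rintro ⟨w, hw, rfl⟩
        simpa using hw
      · intro hx
        exact ⟨f.symm x, hx, by simp⟩
    rw [h1, (f.symm.measurePreserving).measure_preimage hSmeas.nullMeasurableSet]
  have hEconv' : Convex ℝ (f '' E) := hE.linear_image f.toLinearEquiv.toLinearMap
  have hEc' : IsCompact (f '' E) := hEc.image f.continuous
  have hfrontier : μH[(n : ℝ)] (frontier (f '' E)) = μH[(n : ℝ)] (frontier E) := by
    have h3 : frontier (⇑f '' E) = ⇑f '' frontier E := by
      have := (f.toHomeomorph.image_frontier E).symm
      rwa [show (⇑f.toHomeomorph : _ → _) = ⇑f from rfl] at this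
    rw [h3]
    exact f.isometry.hausdorffMeasure_image (Or.inl (by positivity)) _
  calc volume S = volume (f '' S) := hvol
    _ = volume (symmDiff (f '' E) ((fun x => x - phi 0 ‖y‖ 0) '' (f '' E))) := by rw [hfS]
    _ ≤ (ENNReal.ofReal ‖y‖ + ENNReal.ofReal ‖y‖) * volume (pr 0 '' (f '' E)) :=
        vol_symmDiff_le _ hEconv' hEc' (norm_nonneg y)
    _ ≤ (ENNReal.ofReal ‖y‖ + ENNReal.ofReal ‖y‖) * μH[(n : ℝ)] (frontier (f '' E)) := by
        gcongr
        exact proj_vol_le_hausdorff _ hEc'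
    _ = (ENNReal.ofReal ‖y‖ + ENNReal.ofReal ‖y‖) * μH[(n : ℝ)] (frontier E) := by
        rw [hfrontier]

lemma frontier_translate_hausdorff (E : Set (EuclideanSpace ℝ (Fin (n+1))))
    (x₀ : EuclideanSpace ℝ (Fin (n+1))) :
    μH[(n : ℝ)] (frontier ((fun x => x - x₀) '' E)) = μH[(n : ℝ)] (frontier E) := by
  have hiso : Isometry (fun x : EuclideanSpace ℝ (Fin (n+1)) => x - x₀) :=
    Isometry.of_dist_eq fun a b => dist_sub_right a b x₀
  have h3 : frontier ((fun x => x - x₀) '' E) = (fun x => x - x₀) '' frontier E := by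
    have := ((Homeomorph.subRight x₀).image_frontier E).symm
    rwa [show (⇑(Homeomorph.subRight x₀) : _ → _) = fun x => x - x₀ from rfl] at this
  rw [h3]
  exact hiso.hausdorffMeasure_image (Or.inl (by positivity)) _

theorem stmt6 (d : ℕ) :
    ∃ C : ℝ, 0 < C ∧
      ∀ E : Set (EuclideanSpace ℝ (Fin d)), Convex ℝ E → IsCompact E →
        (interior E).Nonempty →
        ∀ y : EuclideanSpace ℝ (Fin d),
          (volume (symmDiff E ((fun x => x - y) '' E))).toReal ≤
            C * ‖y‖ * (μH[(d : ℝ) - 1] (frontier E)).toReal := by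
  match d with
  | 0 =>
    refine ⟨1, one_pos, fun E _ _ _ y => ?_⟩
    have hy : y = 0 := Subsingleton.elim _ _
    have h1 : (fun x : EuclideanSpace ℝ (Fin 0) => x - y) '' E = E := by
      rw [hy]; simp
    rw [h1, symmDiff_self]
    show (volume (⊥ : Set (EuclideanSpace ℝ (Fin 0)))).toReal ≤ _
    rw [show (⊥ : Set (EuclideanSpace ℝ (Fin 0))) = ∅ from rfl, measure_empty]
    simp only [ENNReal.toReal_zero]
    positivity
  | n + 1 =>
    refine ⟨2, two_pos, fun E hE hEc hint y => ?_⟩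
    have hcast : ((n + 1 : ℕ) : ℝ) - 1 = (n : ℝ) := by push_cast; ring
    rw [hcast]
    -- finiteness
    obtain ⟨x₀, hx₀⟩ := hint
    have hfin : μH[(n : ℝ)] (frontier E) < ⊤ := by
      set E₀ := (fun x => x - x₀) '' E with hE₀
      have hconv₀ : Convex ℝ E₀ := by
        have : E₀ = (fun x => (-x₀) + x) '' E := by
          rw [hE₀]
          refine Set.image_congr fun x _ => ?_
          exact sub_eq_neg_add x x₀
        rw [this]
        exact hE.translate (-x₀)
      have hcomp₀ : IsCompact E₀ := hEc.image (continuous_id.sub continuous_const)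
      have h0int : (0 : EuclideanSpace ℝ (Fin (n+1))) ∈ interior E₀ := by
        refine mem_interior.2 ⟨(fun x => x - x₀) '' interior E, ?_, ?_, ?_⟩
        · exact Set.image_mono interior_subset
        · have := (Homeomorph.subRight x₀).isOpenMap
          exact this _ isOpen_interior
        · exact ⟨x₀, hx₀, sub_self x₀⟩
      have := hausdorff_frontier_lt_top E₀ hconv₀ hcomp₀ h0int
      rwa [frontier_translate_hausdorff E x₀] at this
    have hbound := main_aux E hE hEc y
    have hRHSne : (ENNReal.ofReal ‖y‖ + ENNReal.ofReal ‖y‖) * μH[(n : ℝ)] (frontier E) ≠ ⊤ :=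
      ENNReal.mul_ne_top (by simp [ENNReal.ofReal_ne_top])
        hfin.ne
    have h2 := ENNReal.toReal_mono hRHSne hbound
    refine h2.trans ?_
    rw [ENNReal.toReal_mul, ENNReal.toReal_add ENNReal.ofReal_ne_top ENNReal.ofReal_ne_top,
      ENNReal.toReal_ofReal (norm_nonneg y)]
    ring_nf
    exact le_refl _
end

section
/- Let π be the (n+1)-dimensional irreducible representation of SL(2,ℝ) as above, let I ⊂ ℝ be a bounded interval, and let W = ℝ·v_n be the line of vectors fixed by all π([[1,0],[−y,1]]). Then there is C > 0 such that for all β ∈ (0,1), τ ∈ I, and x ∈ ℝ^{n+1}: sup_{y ∈ [0,β]+τ} ‖pr_W(π([[1,0],[−y,1]])x)‖ ≥ C·β^n·‖x‖, where pr_W is the orthogonal projection onto W. -/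
/-- The matrix of `π([[1,0],[−y,1]])` in the basis `v_0, …, v_n` of the `(n+1)`-dimensional
irreducible representation of `SL(2,ℝ)`: lower triangular unipotent with entries
`p_l(y) = (−y)^l / l!` on the `l`-th subdiagonal. -/
noncomputable def lowerUnip (n : ℕ) (y : ℝ) : Matrix (Fin (n + 1)) (Fin (n + 1)) ℝ :=
  fun i j =>
    if (j : ℕ) ≤ (i : ℕ) then (-y) ^ ((i : ℕ) - (j : ℕ)) / Nat.factorial ((i : ℕ) - (j : ℕ))
    else 0

namespace Stmt11Aux

/-- Lower bound for an injective `mulVec`. -/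
lemma lb_of_injective {N : ℕ} (A : Matrix (Fin (N+1)) (Fin (N+1)) ℝ)
    (h : Function.Injective A.mulVec) :
    ∃ c : ℝ, 0 < c ∧ ∀ d : Fin (N+1) → ℝ, c * ‖d‖ ≤ ‖A.mulVec d‖ := by
  have hinj : Function.Injective A.mulVecLin := h
  have hbij : Function.Bijective A.mulVecLin :=
    ⟨hinj, LinearMap.surjective_of_injective hinj⟩
  let e := LinearEquiv.ofBijective A.mulVecLin hbij
  let e' := e.toContinuousLinearEquiv
  set K : ℝ := ‖(e'.symm : (Fin (N+1) → ℝ) →L[ℝ] (Fin (N+1) → ℝ))‖ with hK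
  have hK0 : 0 ≤ K := norm_nonneg _
  refine ⟨(K + 1)⁻¹, by positivity, fun d => ?_⟩
  have h1 : ‖d‖ ≤ K * ‖e' d‖ := by
    have := (e'.symm : (Fin (N+1) → ℝ) →L[ℝ] (Fin (N+1) → ℝ)).le_opNorm (e' d)
    simpa using this
  have h2 : ‖e' d‖ = ‖A.mulVec d‖ := rfl
  have h3 : ‖d‖ ≤ (K + 1) * ‖A.mulVec d‖ := by
    rw [← h2]; nlinarith [norm_nonneg (e' d)]
  rw [inv_mul_le_iff₀ (by positivity)]
  linarith

/-- The matrix of Taylor coefficients at `τ` of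
`u ↦ ((lowerUnip n (τ+u)).mulVec x) (Fin.last n)`. -/
noncomputable def Mmat (n : ℕ) (τ : ℝ) : Matrix (Fin (n+1)) (Fin (n+1)) ℝ :=
  fun m j => if (m : ℕ) + (j : ℕ) ≤ n then
    ((n - (j:ℕ)).choose m : ℝ) * (-τ) ^ (n - (j:ℕ) - (m:ℕ)) * (-1) ^ (m:ℕ)
      / ((n - (j:ℕ)).factorial : ℝ)
  else 0

lemma aux_sum (n jj : ℕ) (hj : jj ≤ n) (τ u : ℝ) :
    ∑ m ∈ Finset.range (n+1),
      (if m + jj ≤ n then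
        ((n - jj).choose m : ℝ) * (-τ) ^ (n - jj - m) * (-1) ^ m / ((n - jj).factorial : ℝ)
      else 0) * u ^ m
    = (-(τ + u)) ^ (n - jj) / ((n - jj).factorial : ℝ) := by
  set N := n - jj with hN
  have hsub : Finset.range (N+1) ⊆ Finset.range (n+1) :=
    Finset.range_subset_range.mpr (by omega)
  rw [← Finset.sum_subset hsub ?h0]
  · have hpow : (-(τ + u)) ^ N = ∑ m ∈ Finset.range (N+1),
        (-u) ^ m * (-τ) ^ (N - m) * (N.choose m : ℝ) := by
      have h : (-(τ + u)) = (-u) + (-τ) := by ring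
      rw [h, add_pow]
    rw [hpow, Finset.sum_div]
    refine Finset.sum_congr rfl (fun m hm => ?_)
    have hm' : m + jj ≤ n := by
      have := Finset.mem_range.mp hm; omega
    rw [if_pos hm']
    rw [neg_pow u m]
    ring
  · intro m hmn hmN
    have : ¬ (m + jj ≤ n) := by
      simp only [Finset.mem_range] at hmn hmN; omega
    simp [this]

lemma key (n : ℕ) (τ u : ℝ) (x : Fin (n+1) → ℝ) :
    ((lowerUnip n (τ + u)).mulVec x) (Fin.last n)
      = ∑ m : Fin (n+1), ((Mmat n τ).mulVec x) m * u ^ (m:ℕ) := by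
  unfold lowerUnip Mmat Matrix.mulVec dotProduct
  simp only [Fin.val_last]
  have hR : ∀ m : Fin (n+1),
      (∑ j : Fin (n+1), (if (m:ℕ) + (j:ℕ) ≤ n then
          ((n - (j:ℕ)).choose m : ℝ) * (-τ) ^ (n - (j:ℕ) - (m:ℕ)) * (-1) ^ (m:ℕ)
            / ((n - (j:ℕ)).factorial : ℝ) else 0) * x j) * u ^ (m:ℕ)
      = ∑ j : Fin (n+1), ((if (m:ℕ) + (j:ℕ) ≤ n then
          ((n - (j:ℕ)).choose m : ℝ) * (-τ) ^ (n - (j:ℕ) - (m:ℕ)) * (-1) ^ (m:ℕ)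
            / ((n - (j:ℕ)).factorial : ℝ) else 0) * u ^ (m:ℕ)) * x j := by
    intro m
    rw [Finset.sum_mul]
    exact Finset.sum_congr rfl (fun j _ => by ring)
  simp only [hR]
  rw [Finset.sum_comm]
  refine Finset.sum_congr rfl (fun j _ => ?_)
  have hj : (j:ℕ) ≤ n := Nat.lt_succ_iff.mp j.isLt
  rw [if_pos hj, ← Finset.sum_mul]
  congr 1
  have h := aux_sum n (j:ℕ) hj τ u
  rw [← h, ← Fin.sum_univ_eq_sum_range (fun m =>
    (if m + (j:ℕ) ≤ n then
        ((n - (j:ℕ)).choose m : ℝ) * (-τ) ^ (n - (j:ℕ) - m) * (-1) ^ m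
          / ((n - (j:ℕ)).factorial : ℝ) else 0) * u ^ m) (n+1)]

lemma det_Mmat_ne (n : ℕ) (τ : ℝ) : (Mmat n τ).det ≠ 0 := by
  have hperm := Matrix.det_permute' (Fin.revPerm) (Mmat n τ)
  have htri : ((Mmat n τ).submatrix id (Fin.revPerm : Equiv.Perm (Fin (n+1)))).BlockTriangular id := by
    intro i j hij
    simp only [Matrix.submatrix_apply, id_eq] at *
    have hrev : ((Fin.revPerm j : Fin (n+1)) : ℕ) = n - (j : ℕ) := by
      simp [Fin.revPerm, Fin.val_rev]
    unfold Mmat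
    rw [hrev, if_neg]
    have hj : (j:ℕ) ≤ n := Nat.lt_succ_iff.mp j.isLt
    have hij' : (j:ℕ) < (i:ℕ) := hij
    omega
  have hdiag : ∀ i : Fin (n+1),
      ((Mmat n τ).submatrix id (Fin.revPerm : Equiv.Perm (Fin (n+1)))) i i ≠ 0 := by
    intro i
    simp only [Matrix.submatrix_apply, id_eq]
    have hrev : ((Fin.revPerm i : Fin (n+1)) : ℕ) = n - (i : ℕ) := by
      simp [Fin.revPerm, Fin.val_rev]
    have hi : (i:ℕ) ≤ n := Nat.lt_succ_iff.mp i.isLt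
    unfold Mmat
    rw [hrev, if_pos (by omega), Nat.sub_sub_self hi]
    simp only [Nat.choose_self, Nat.sub_self, pow_zero, Nat.cast_one, one_mul, mul_one]
    have h1 : ((-1 : ℝ)) ^ (i:ℕ) ≠ 0 := by
      apply pow_ne_zero; norm_num
    have h2 : (((i:ℕ).factorial : ℝ)) ≠ 0 := by
      exact_mod_cast (Nat.factorial_pos (i:ℕ)).ne'
    exact div_ne_zero h1 h2
  have hdet : ((Mmat n τ).submatrix id (Fin.revPerm : Equiv.Perm (Fin (n+1)))).det ≠ 0 := by
    rw [Matrix.det_of_upperTriangular htri]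
    exact Finset.prod_ne_zero_iff.mpr (fun i _ => hdiag i)
  intro h
  rw [hperm, h, mul_zero] at hdet
  exact hdet rfl

lemma Mmat_mulVec_injective (n : ℕ) (τ : ℝ) :
    Function.Injective (Mmat n τ).mulVec := by
  rw [Matrix.mulVec_injective_iff_isUnit, Matrix.isUnit_iff_isUnit_det]
  exact isUnit_iff_ne_zero.mpr (det_Mmat_ne n τ)

set_option maxHeartbeats 1000000 in
lemma exists_c2 (n : ℕ) (a b : ℝ) (hab : a ≤ b) :
    ∃ c : ℝ, 0 < c ∧ ∀ τ ∈ Set.Icc a b, ∀ x : Fin (n+1) → ℝ,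
      c * ‖x‖ ≤ ‖(Mmat n τ).mulVec x‖ := by
  set S : Set (ℝ × (Fin (n+1) → ℝ)) := Set.Icc a b ×ˢ Metric.sphere 0 1 with hS
  have hSc : IsCompact S := (isCompact_Icc).prod (isCompact_sphere 0 1)
  have hSn : S.Nonempty := by
    obtain ⟨v, hv⟩ := exists_norm_eq (Fin (n+1) → ℝ) (zero_le_one)
    exact ⟨(a, v), ⟨le_refl a, hab⟩, by simpa [Metric.mem_sphere] using hv⟩
  have hcont : Continuous (fun p : ℝ × (Fin (n+1) → ℝ) => ‖(Mmat n p.1).mulVec p.2‖) := by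
    apply Continuous.norm
    apply continuous_pi
    intro i
    unfold Matrix.mulVec dotProduct
    apply continuous_finset_sum
    intro j _
    apply Continuous.mul
    · simp only [Mmat]
      split_ifs with hcond
      · fun_prop
      · exact continuous_const
    · exact (continuous_apply j).comp continuous_snd
  obtain ⟨p0, hp0S, hmin⟩ := hSc.exists_isMinOn hSn hcont.continuousOn
  simp only [isMinOn_iff] at hmin
  have hmin' : ∀ p ∈ S, ‖(Mmat n p0.1).mulVec p0.2‖ ≤ ‖(Mmat n p.1).mulVec p.2‖ := hmin
  set c := ‖(Mmat n p0.1).mulVec p0.2‖ with hc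
  have hp0sph : ‖p0.2‖ = 1 := by
    have := hp0S.2
    simpa [Metric.mem_sphere] using this
  have hcpos : 0 < c := by
    rcases (norm_nonneg ((Mmat n p0.1).mulVec p0.2)).lt_or_eq with h | h
    · exact h
    · exfalso
      have h0 : (Mmat n p0.1).mulVec p0.2 = 0 := by
        rw [← norm_eq_zero]; exact h.symm
      have hz : p0.2 = 0 := by
        apply Mmat_mulVec_injective n p0.1
        rw [h0, Matrix.mulVec_zero]
      rw [hz] at hp0sph
      simp at hp0sph
  refine ⟨c, hcpos, fun τ hτ x => ?_⟩
  rcases eq_or_ne x 0 with rfl | hx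
  · simp [Matrix.mulVec_zero]
  · have hxn : (0:ℝ) < ‖x‖ := norm_pos_iff.mpr hx
    have hmem : (τ, ‖x‖⁻¹ • x) ∈ S := by
      refine ⟨hτ, ?_⟩
      rw [Metric.mem_sphere, dist_zero_right, norm_smul, norm_inv, norm_norm,
        inv_mul_cancel₀ hxn.ne']
    have h1 := hmin' (τ, ‖x‖⁻¹ • x) hmem
    simp only [Matrix.mulVec_smul, norm_smul, norm_inv, norm_norm] at h1
    calc c * ‖x‖ ≤ (‖x‖⁻¹ * ‖(Mmat n τ).mulVec x‖) * ‖x‖ :=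
          mul_le_mul_of_nonneg_right h1 (norm_nonneg x)
      _ = ‖(Mmat n τ).mulVec x‖ := by field_simp

lemma vandermonde_inj (n : ℕ) :
    Function.Injective (Matrix.vandermonde (fun k : Fin (n+1) => (k:ℝ)/(n+1))).mulVec := by
  rw [Matrix.mulVec_injective_iff_isUnit, Matrix.isUnit_iff_isUnit_det]
  apply isUnit_iff_ne_zero.mpr
  rw [Matrix.det_vandermonde]
  apply Finset.prod_ne_zero_iff.mpr
  intro i _
  apply Finset.prod_ne_zero_iff.mpr
  intro j hj
  have hij : i < j := Finset.mem_Ioi.mp hj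
  have h1 : (i:ℝ) < (j:ℝ) := by exact_mod_cast hij
  have hn1 : (0:ℝ) < (n:ℝ)+1 := by positivity
  have hlt : (i:ℝ)/((n:ℝ)+1) < (j:ℝ)/((n:ℝ)+1) := by gcongr
  exact sub_ne_zero.mpr hlt.ne'

lemma exists_coord {N : ℕ} (v : Fin (N+1) → ℝ) : ∃ i, ‖v‖ = |v i| := by
  obtain ⟨i, _, hi⟩ := Finset.exists_mem_eq_sup (Finset.univ : Finset (Fin (N+1)))
    Finset.univ_nonempty (fun i => ‖v i‖₊)
  refine ⟨i, ?_⟩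
  rw [Pi.norm_def, hi]
  simp [Real.norm_eq_abs]

end Stmt11Aux

/-- The norm of the orthogonal projection onto `W = ℝ·v_n` of a vector is the absolute
value of its last coordinate; `[0,β] + τ = [τ, τ+β]`. -/
theorem stmt11 (n : ℕ) (a b : ℝ) (hab : a ≤ b) :
    ∃ C : ℝ, 0 < C ∧
      ∀ β : ℝ, β ∈ Set.Ioo (0 : ℝ) 1 →
        ∀ τ ∈ Set.Icc a b,
          ∀ x : Fin (n + 1) → ℝ,
            ∃ y ∈ Set.Icc τ (τ + β),
              C * β ^ n * Real.sqrt (∑ i, x i ^ 2) ≤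
                |((lowerUnip n y).mulVec x) (Fin.last n)| := by
  classical
  obtain ⟨c1, hc1, h1⟩ := Stmt11Aux.lb_of_injective _ (Stmt11Aux.vandermonde_inj n)
  obtain ⟨c2, hc2, h2⟩ := Stmt11Aux.exists_c2 n a b hab
  have htpos : (0:ℝ) < Real.sqrt (n+1) := Real.sqrt_pos.mpr (by positivity)
  refine ⟨c1 * c2 / Real.sqrt (n+1), by positivity, ?_⟩
  intro β hβ τ hτ x
  have hβ0 : 0 < β := hβ.1
  have hβ1 : β < 1 := hβ.2
  set s : Fin (n+1) → ℝ := fun k => (k:ℝ)/((n:ℝ)+1) with hs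
  set e : Fin (n+1) → ℝ := (Stmt11Aux.Mmat n τ).mulVec x with he
  set d : Fin (n+1) → ℝ := fun m => β^(m:ℕ) * e m with hd
  set V := Matrix.vandermonde s with hV
  have hsk : ∀ k : Fin (n+1), 0 ≤ s k ∧ s k ≤ 1 := by
    intro k
    constructor
    · rw [hs]; positivity
    · rw [hs, div_le_one (by positivity)]
      have : (k:ℕ) ≤ n := Nat.lt_succ_iff.mp k.isLt
      have := (Nat.cast_le (α := ℝ)).mpr this
      linarith
  have hval : ∀ k : Fin (n+1),
      (V.mulVec d) k = ((lowerUnip n (τ + β * s k)).mulVec x) (Fin.last n) := by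
    intro k
    rw [Stmt11Aux.key n τ (β * s k) x]
    have hVd : (V.mulVec d) k = ∑ m : Fin (n+1), s k ^ (m:ℕ) * d m := by
      simp [hV, Matrix.mulVec, dotProduct, Matrix.vandermonde_apply]
    rw [hVd]
    refine Finset.sum_congr rfl (fun m _ => ?_)
    simp only [hd]
    rw [mul_pow]
    ring
  obtain ⟨k0, hk0⟩ := Stmt11Aux.exists_coord (V.mulVec d)
  obtain ⟨m0, hm0⟩ := Stmt11Aux.exists_coord e
  have A1 : c1 * ‖d‖ ≤ |(V.mulVec d) k0| := by rw [← hk0]; exact h1 d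
  have A2 : β^n * ‖e‖ ≤ ‖d‖ := by
    rw [hm0]
    calc β^n * |e m0| ≤ β^(m0:ℕ) * |e m0| := by
          apply mul_le_mul_of_nonneg_right _ (abs_nonneg _)
          exact pow_le_pow_of_le_one hβ0.le hβ1.le (Nat.lt_succ_iff.mp m0.isLt)
      _ = |d m0| := by
          simp only [hd, abs_mul, abs_of_nonneg (pow_nonneg hβ0.le _)]
      _ ≤ ‖d‖ := by
          simpa [Real.norm_eq_abs] using norm_le_pi_norm d m0
  have A3 : c2 * ‖x‖ ≤ ‖e‖ := h2 τ hτ x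
  have A4 : Real.sqrt (∑ i, x i ^ 2) ≤ Real.sqrt ((n:ℝ)+1) * ‖x‖ := by
    rw [← Real.sqrt_sq (norm_nonneg x), ← Real.sqrt_mul (by positivity)]
    apply Real.sqrt_le_sqrt
    have hxi : ∀ i, x i ^ 2 ≤ ‖x‖^2 := by
      intro i
      have h := norm_le_pi_norm x i
      rw [Real.norm_eq_abs] at h
      nlinarith [abs_nonneg (x i), sq_abs (x i)]
    calc ∑ i, x i ^ 2 ≤ ∑ _i : Fin (n+1), ‖x‖^2 := Finset.sum_le_sum (fun i _ => hxi i)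
      _ = ((n:ℝ)+1) * ‖x‖^2 := by
          rw [Finset.sum_const, Finset.card_univ, Fintype.card_fin]
          push_cast
          ring
  refine ⟨τ + β * s k0, ⟨?_, ?_⟩, ?_⟩
  · nlinarith [(hsk k0).1]
  · nlinarith [(hsk k0).1, (hsk k0).2]
  · rw [← hval k0]
    calc c1 * c2 / Real.sqrt (n+1) * β ^ n * Real.sqrt (∑ i, x i ^ 2)
        ≤ c1 * c2 / Real.sqrt (n+1) * β ^ n * (Real.sqrt ((n:ℝ)+1) * ‖x‖) := by
          apply mul_le_mul_of_nonneg_left ?_ (by positivity)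
          push_cast at A4 ⊢
          exact A4
      _ = c1 * (β ^ n * (c2 * ‖x‖)) := by
          field_simp
      _ ≤ c1 * (β ^ n * ‖e‖) := by
          apply mul_le_mul_of_nonneg_left ?_ hc1.le
          exact mul_le_mul_of_nonneg_left A3 (by positivity)
      _ ≤ c1 * ‖d‖ := mul_le_mul_of_nonneg_left A2 hc1.le
      _ ≤ |(V.mulVec d) k0| := A1
end

section
/- Let m ≥ 1, d > 0, T > 0, A > 0 with A ≤ √T, and let α be the smaller positive root of R(t) = −d² t^{2/m+2} + t^{2/m} T² − A², assuming roots exist. Suppose d lies in a compact subset of (0,∞). Then α^{2/m} = A²/T² + O(1/T^{m+3}) as T → ∞, with implied constant depending only on the compact set. -/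
set_option maxHeartbeats 1000000


theorem stmt14 (m : ℕ) (hm : 1 ≤ m) (K : Set ℝ) (hK : IsCompact K)
    (hKpos : K ⊆ Set.Ioi 0) :
    ∃ C T₀ : ℝ, 0 < C ∧
      ∀ T : ℝ, T₀ ≤ T → ∀ d ∈ K, ∀ A : ℝ, 0 < A → A ≤ Real.sqrt T →
        ∀ α : ℝ, 0 < α →
          -d ^ 2 * α ^ (2 / (m : ℝ) + 2) + α ^ (2 / (m : ℝ)) * T ^ 2 - A ^ 2 = 0 →
          (∀ t : ℝ, 0 < t →
            -d ^ 2 * t ^ (2 / (m : ℝ) + 2) + t ^ (2 / (m : ℝ)) * T ^ 2 - A ^ 2 = 0 →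
            α ≤ t) →
          |α ^ (2 / (m : ℝ)) - A ^ 2 / T ^ 2| ≤ C / T ^ ((m : ℝ) + 3) := by
  set M : ℝ := sSup K + 1 with hMdef
  refine ⟨M ^ 2 * 2 ^ (m + 1) + 1, max 1 (2 ^ (m + 1) * M ^ 2), by positivity, ?_⟩
  intro T hT d hd A hA hAT α hα heq hmin
  have hd0 : (0:ℝ) < d := hKpos hd
  have hdM : d ≤ M := le_of_lt (lt_of_le_of_lt (le_csSup hK.bddAbove hd) (lt_add_one _))
  have hM0 : (0:ℝ) < M := hd0.trans_le hdM
  have hT1 : (1:ℝ) ≤ T := le_trans (le_max_left _ _) hT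
  have hT0 : (0:ℝ) < T := lt_of_lt_of_le one_pos hT1
  have hTM : 2 ^ (m + 1) * M ^ 2 ≤ T := le_trans (le_max_right _ _) hT
  have hm0 : (0:ℝ) < (m:ℝ) := by exact_mod_cast hm
  set q : ℝ := 2 / (m:ℝ) with hqdef
  have hq : 0 < q := by positivity
  have hqm : q * (m:ℝ) = 2 := div_mul_cancel₀ 2 (ne_of_gt hm0)
  clear hMdef
  clear_value q M
  have hA2 : A ^ 2 ≤ T := by
    have h := pow_le_pow_left₀ hA.le hAT 2
    rwa [Real.sq_sqrt hT0.le] at h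
  set t₁ : ℝ := T / (M * Real.sqrt 2) with ht₁def
  have hs2 : Real.sqrt 2 ^ 2 = 2 := Real.sq_sqrt (by norm_num)
  have hs2pos : 0 < Real.sqrt 2 := Real.sqrt_pos.mpr (by norm_num)
  have ht₁ : 0 < t₁ := by positivity
  have ht₁sq : t₁ ^ 2 = T ^ 2 / (M ^ 2 * 2) := by
    rw [ht₁def, div_pow, mul_pow, hs2]
  clear ht₁def
  clear_value t₁
  -- key size condition
  have hkey : 2 ^ (m + 1) * M ^ 2 ≤ T ^ (m + 2) :=
    le_trans hTM (le_self_pow₀ hT1 (by omega))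
  have hbig : (2 / T) ^ m ≤ t₁ ^ 2 := by
    rw [ht₁sq, div_pow, div_le_div_iff₀ (by positivity) (by positivity)]
    have : 2 ^ m * (M ^ 2 * 2) = 2 ^ (m + 1) * M ^ 2 := by ring
    calc 2 ^ m * (M ^ 2 * 2) = 2 ^ (m + 1) * M ^ 2 := by ring
      _ ≤ T ^ (m + 2) := hkey
      _ = T ^ 2 * T ^ m := by ring
  have ht₁q : 2 / T ≤ t₁ ^ q := by
    have h1 : t₁ ^ q = (t₁ ^ 2) ^ ((m:ℝ)⁻¹) := by
      rw [← Real.rpow_natCast t₁ 2, ← Real.rpow_mul ht₁.le]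
      norm_num [hqdef, div_eq_mul_inv]
    have h2 : (2 / T : ℝ) = ((2 / T) ^ m) ^ ((m:ℝ)⁻¹) := by
      rw [← Real.rpow_natCast (2/T) m, ← Real.rpow_mul (by positivity),
        mul_inv_cancel₀ (ne_of_gt hm0), Real.rpow_one]
    rw [h1, h2]
    exact Real.rpow_le_rpow (by positivity) hbig (by positivity)
  have ht₁q0 : 0 < t₁ ^ q := Real.rpow_pos_of_pos ht₁ q
  -- value of the function at t₁ is nonnegative
  have hrpow_add : ∀ x : ℝ, 0 < x → x ^ (q + 2) = x ^ q * x ^ 2 := by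
    intro x hx
    rw [Real.rpow_add hx, Real.rpow_two]
  have hdM2 : d ^ 2 ≤ M ^ 2 := by nlinarith
  have hdt₁ : d ^ 2 * t₁ ^ 2 ≤ T ^ 2 / 2 := by
    rw [ht₁sq, mul_div_assoc', div_le_div_iff₀ (by positivity) (by norm_num)]
    nlinarith [mul_le_mul_of_nonneg_right hdM2 (sq_nonneg T)]
  have hgt₁ : 0 ≤ -d ^ 2 * t₁ ^ (q + 2) + t₁ ^ q * T ^ 2 - A ^ 2 := by
    rw [hrpow_add t₁ ht₁]
    have h1 : t₁ ^ q * T ^ 2 - d ^ 2 * (t₁ ^ q * t₁ ^ 2) ≥ t₁ ^ q * (T ^ 2 / 2) := by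
      nlinarith [mul_le_mul_of_nonneg_left hdt₁ ht₁q0.le]
    have h2 : t₁ ^ q * (T ^ 2 / 2) ≥ (2 / T) * (T ^ 2 / 2) := by
      apply mul_le_mul_of_nonneg_right ht₁q (by positivity)
    have h3 : (2 / T) * (T ^ 2 / 2) = T := by field_simp
    linarith [h1, h2, h3 ▸ h2, hA2]
  -- continuity and IVT
  set g : ℝ → ℝ := fun t => -d ^ 2 * t ^ (q + 2) + t ^ q * T ^ 2 - A ^ 2 with hgdef
  have cg : Continuous g := by
    have c1 : Continuous fun t : ℝ => t ^ (q + 2) :=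
      continuous_iff_continuousAt.mpr fun x =>
        Real.continuousAt_rpow_const x _ (Or.inr (by positivity))
    have c2 : Continuous fun t : ℝ => t ^ q :=
      continuous_iff_continuousAt.mpr fun x =>
        Real.continuousAt_rpow_const x _ (Or.inr hq.le)
    exact ((continuous_const.mul c1).add (c2.mul continuous_const)).sub continuous_const
  have hg0 : g 0 = -A ^ 2 := by
    simp [hgdef, Real.zero_rpow (ne_of_gt hq), Real.zero_rpow (by positivity : q + 2 ≠ 0)]
  have hmem : (0:ℝ) ∈ Set.Icc (g 0) (g t₁) := by
    constructor
    · rw [hg0]; nlinarith [hA]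
    · exact hgt₁
  obtain ⟨t, htmem, hgt⟩ := intermediate_value_Icc ht₁.le cg.continuousOn hmem
  have ht0 : 0 < t := by
    rcases lt_or_eq_of_le htmem.1 with h | h
    · exact h
    · exfalso; rw [← h] at hgt; rw [hg0] at hgt; nlinarith [hA]
  have hαt₁ : α ≤ t₁ := le_trans (hmin t ht0 hgt) htmem.2
  -- now the main bound
  have hdα : d ^ 2 * α ^ 2 ≤ T ^ 2 / 2 := by
    have hsq : α ^ 2 ≤ t₁ ^ 2 := pow_le_pow_left₀ hα.le hαt₁ 2
    nlinarith [mul_le_mul_of_nonneg_left hsq (sq_nonneg d)]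
  have hαq0 : 0 < α ^ q := Real.rpow_pos_of_pos hα q
  have hEq2 : α ^ q * T ^ 2 - A ^ 2 = d ^ 2 * (α ^ q * α ^ 2) := by
    have := hrpow_add α hα
    rw [this] at heq
    linarith [heq]
  have hαqle : α ^ q ≤ 2 / T := by
    have h1 : α ^ q * T ^ 2 ≤ A ^ 2 + α ^ q * (T ^ 2 / 2) := by
      nlinarith [hdα, hαq0]
    have h2 : α ^ q * (T ^ 2 / 2) ≤ A ^ 2 := by nlinarith
    rw [le_div_iff₀ hT0]
    nlinarith [h2, hA2, hT0, hT1, hαq0]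
  have hα2 : α ^ 2 ≤ (2 / T) ^ m := by
    have h1 : (α ^ q) ^ m = α ^ 2 := by
      rw [← Real.rpow_natCast (α ^ q) m, ← Real.rpow_mul hα.le, hqm, Real.rpow_two]
    rw [← h1]
    exact pow_le_pow_left₀ hαq0.le hαqle m
  have habs : α ^ q - A ^ 2 / T ^ 2 = d ^ 2 * (α ^ q * α ^ 2) / T ^ 2 := by
    field_simp
    linarith [hEq2]
  have hTpow : T ^ ((m:ℝ) + 3) = T ^ (m + 3) := by
    rw [← Real.rpow_natCast T (m + 3)]
    push_cast
    ring_nf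
  rw [habs, hTpow, abs_of_nonneg (by positivity)]
  have hnum : d ^ 2 * (α ^ q * α ^ 2) ≤ M ^ 2 * (2 ^ (m + 1) / T ^ (m + 1)) := by
    have h1 : α ^ q * α ^ 2 ≤ (2 / T) * (2 / T) ^ m := by
      have := mul_le_mul hαqle hα2 (by positivity) (by positivity)
      exact this
    have h2 : (2 / T) * (2 / T) ^ m = 2 ^ (m + 1) / T ^ (m + 1) := by
      rw [div_pow]; field_simp; ring
    calc d ^ 2 * (α ^ q * α ^ 2) ≤ M ^ 2 * ((2 / T) * (2 / T) ^ m) :=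
          mul_le_mul hdM2 h1 (by positivity) (by positivity)
      _ = M ^ 2 * (2 ^ (m + 1) / T ^ (m + 1)) := by rw [h2]
  rw [div_le_div_iff₀ (by positivity) (by positivity)]
  calc d ^ 2 * (α ^ q * α ^ 2) * T ^ (m + 3)
      ≤ (M ^ 2 * (2 ^ (m + 1) / T ^ (m + 1))) * T ^ (m + 3) := by
        apply mul_le_mul_of_nonneg_right hnum (by positivity)
    _ = (M ^ 2 * 2 ^ (m + 1)) * T ^ 2 := by
        field_simp
        ring
    _ ≤ (M ^ 2 * 2 ^ (m + 1) + 1) * T ^ 2 := by nlinarith [sq_nonneg T, hT0]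
end
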